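/- arXiv:0806.2916 — 2 statements merged into one kernel-verified Lean document; each statement's English description precedes it below -/
import Mathlib

section
/- Let 0 < d < 1 and let {u_j : 1 ≤ j ≤ n} be an orthonormal basis of an n-dimensional complex inner-product space U. If v_1, …, v_n ∈ U satisfy ‖v_j − u_j‖ ≤ d for j = 1, …, n, then the dimension of the linear span of {v_1, …, v_n} is at least (1 − d²)n. -/
/-!
If `W` is the span of the `v_j`, the distance from `u_j` to `W` is at most `‖u_j - v_j‖ ≤ d`,
so the projection `P` onto `Wᗮ` satisfies `‖P u_j‖ ≤ d`. Summing over an orthonormal basis,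
`∑ j, ‖P u_j‖² = dim Wᗮ` (Parseval, applied once in each of the two bases), hence
`dim Wᗮ ≤ d² n` and `dim W = n - dim Wᗮ ≥ (1 - d²) n`.
-/

open Module Submodule
open scoped InnerProductSpace

section

variable {𝕜 E : Type*} [RCLike 𝕜] [NormedAddCommGroup E] [InnerProductSpace 𝕜 E]

theorem Submodule.norm_starProjection_orthogonal_le {K : Submodule 𝕜 E}
    [K.HasOrthogonalProjection] {y : E} (hy : y ∈ K) (x : E) :
    ‖Kᗮ.starProjection x‖ ≤ ‖x - y‖ := by
  have hy0 : Kᗮ.starProjection y = 0 :=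
    (starProjection_apply_eq_zero_iff Kᗮ).mpr (K.le_orthogonal_orthogonal hy)
  calc ‖Kᗮ.starProjection x‖ = ‖Kᗮ.starProjection (x - y)‖ := by rw [map_sub, hy0, sub_zero]
    _ ≤ ‖x - y‖ := Kᗮ.norm_starProjection_apply_le (x - y)

theorem Submodule.norm_starProjection_sq_eq_sum {K : Submodule 𝕜 E} [FiniteDimensional 𝕜 K]
    {κ : Type*} [Fintype κ] (w : OrthonormalBasis κ 𝕜 K) (x : E) :
    ‖K.starProjection x‖ ^ 2 = ∑ i, ‖⟪(w i : E), x⟫_𝕜‖ ^ 2 := by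
  rw [starProjection_apply, norm_coe, ← w.sum_sq_norm_inner_right]
  simp only [inner_orthogonalProjectionOnto_eq_of_mem_left]

theorem OrthonormalBasis.sum_sq_norm_starProjection {ι : Type*} [Fintype ι]
    (b : OrthonormalBasis ι 𝕜 E) (K : Submodule 𝕜 E) [FiniteDimensional 𝕜 K] :
    ∑ j, ‖K.starProjection (b j)‖ ^ 2 = finrank 𝕜 K := by
  let w := stdOrthonormalBasis 𝕜 K
  calc ∑ j, ‖K.starProjection (b j)‖ ^ 2 = ∑ i, ∑ j, ‖⟪b j, (w i : E)⟫_𝕜‖ ^ 2 := by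
        simp only [K.norm_starProjection_sq_eq_sum w, norm_inner_symm (w _ : E)]
        exact Finset.sum_comm
    _ = ∑ i, ‖(w i : E)‖ ^ 2 := by simp only [b.sum_sq_norm_inner_right]
    _ = finrank 𝕜 K := by simp [norm_coe, w.orthonormal.1]

end

theorem span_dimension_lower_bound_general
    (n : ℕ) (d : ℝ)
    (U : Type*) [NormedAddCommGroup U] [InnerProductSpace ℂ U]
    (u : OrthonormalBasis (Fin n) ℂ U)
    (v : Fin n → U) (hv : ∀ j, ‖v j - u j‖ ≤ d) :
    (1 - d ^ 2) * n ≤ (Module.finrank ℂ (Submodule.span ℂ (Set.range v)) : ℝ) := by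
  have : FiniteDimensional ℂ U := Module.Finite.of_basis u.toBasis
  set W := Submodule.span ℂ (Set.range v)
  have hdist : ∀ j, ‖Wᗮ.starProjection (u j)‖ ≤ d := fun j =>
    (W.norm_starProjection_orthogonal_le (subset_span ⟨j, rfl⟩) (u j)).trans
      (norm_sub_rev (u j) (v j) ▸ hv j)
  have hperp : (finrank ℂ Wᗮ : ℝ) ≤ n * d ^ 2 := by
    rw [← u.sum_sq_norm_starProjection Wᗮ]
    calc ∑ j, ‖Wᗮ.starProjection (u j)‖ ^ 2 ≤ ∑ _j : Fin n, d ^ 2 :=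
          Finset.sum_le_sum fun j _ => pow_le_pow_left₀ (norm_nonneg _) (hdist j) 2
      _ = n * d ^ 2 := by simp
  have hsum : (finrank ℂ W : ℝ) + finrank ℂ Wᗮ = n := by
    rw [← Nat.cast_add, W.finrank_add_finrank_orthogonal, finrank_eq_card_basis u.toBasis,
      Fintype.card_fin]
  linarith

/-- **Kolmogorov width consequence.** If `{u_j}` is an orthonormal basis of an `n`-dimensional
complex inner-product space and `‖v_j - u_j‖ ≤ d < 1`, then the span of the `v_j` has
dimension at least `(1 - d²)n`. -/
theorem span_dimension_lower_bound
    (n : ℕ) (d : ℝ) (hd0 : 0 < d) (hd1 : d < 1)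
    (U : Type*) [NormedAddCommGroup U] [InnerProductSpace ℂ U] [FiniteDimensional ℂ U]
    (u : OrthonormalBasis (Fin n) ℂ U)
    (v : Fin n → U) (hv : ∀ j, ‖v j - u j‖ ≤ d) :
    (1 - d ^ 2) * n ≤ (Module.finrank ℂ (Submodule.span ℂ (Set.range v)) : ℝ) :=
  span_dimension_lower_bound_general n d U u v hv
end

section
/- Let δ > 0, r > 0, a ∈ ℝ, M > 0 and n ∈ ℕ. Let f_1, …, f_n : ℝ → ℂ be measurable with |f_j(x)| ≤ M for all x ∈ ℝ and all j, let λ_1, …, λ_n ∈ (a − r, a + r), let c_1, …, c_n ∈ ℂ, and let φ(x) = (sin(δx/2)/(δx/2))² (with φ(0) = 1). Then ∫_{|x−a| ≥ (1+δ)r} |Σ_{j=1}^n c_j f_j(x) φ(x − λ_j)|² dx ≤ (32 n M² / (3 δ⁷ r³)) · Σ_{j=1}^n |c_j|². -/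
/-!
By Cauchy–Schwarz, `|∑ⱼ uⱼ|² ≤ n ∑ⱼ |uⱼ|²` pointwise, so it suffices to bound each term. On the
region `|x - a| ≥ (1 + δ) r` every `λⱼ` lies at distance at least `δ r` from `x`, and there
`φ(x - λⱼ)² ≤ (2 / (δ |x - λⱼ|))⁴`; integrating this over `|y| ≥ δ r` gives `32 / (3 δ⁷ r³)`.
-/

open MeasureTheory Set Real
open scoped ENNReal

lemma Real.abs_sinc_le_inv_abs {t : ℝ} (ht : t ≠ 0) : |sinc t| ≤ |t|⁻¹ := by
  rw [sinc_of_ne_zero ht, abs_div, ← one_div]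
  exact div_le_div_of_nonneg_right (abs_sin_le_one t) (abs_nonneg t)

lemma sinc_sq_sq_le {δ y : ℝ} (hδ : 0 < δ) (hy : y ≠ 0) :
    (sinc (δ * y / 2) ^ 2) ^ 2 ≤ 16 / δ ^ 4 * (1 / |y| ^ 4) := by
  have hsinc : |sinc (δ * y / 2)| ≤ 2 / (δ * |y|) := by
    simpa [abs_mul, abs_of_pos hδ, div_eq_mul_inv, mul_comm] using
      abs_sinc_le_inv_abs (by positivity : δ * y / 2 ≠ 0)
  calc (sinc (δ * y / 2) ^ 2) ^ 2 = |sinc (δ * y / 2)| ^ 4 := by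
        rw [← pow_mul, pow_abs, abs_of_nonneg (by positivity)]
    _ ≤ (2 / (δ * |y|)) ^ 4 := by gcongr
    _ = 16 / δ ^ 4 * (1 / |y| ^ 4) := by ring

lemma enorm_sum_sq_le_card_mul {ι E : Type*} [SeminormedAddCommGroup E] (s : Finset ι)
    (u : ι → E) : ‖∑ i ∈ s, u i‖ₑ ^ 2 ≤ s.card * ∑ i ∈ s, ‖u i‖ₑ ^ 2 := by
  have h : ‖∑ i ∈ s, u i‖₊ ^ 2 ≤ s.card * ∑ i ∈ s, ‖u i‖₊ ^ 2 :=
    (pow_le_pow_left₀ (by positivity) (nnnorm_sum_le s u) 2).trans sq_sum_le_card_mul_sum_sq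
  simp only [enorm_eq_nnnorm]
  exact_mod_cast h

lemma lintegral_enorm_sum_sq_le {α ι E : Type*} [MeasurableSpace α] [NormedAddCommGroup E]
    {μ : Measure α} (s : Finset ι) {u : ι → α → E}
    (hu : ∀ i ∈ s, AEStronglyMeasurable (u i) μ) :
    ∫⁻ x, ‖∑ i ∈ s, u i x‖ₑ ^ 2 ∂μ ≤ s.card * ∑ i ∈ s, ∫⁻ x, ‖u i x‖ₑ ^ 2 ∂μ := by
  calc ∫⁻ x, ‖∑ i ∈ s, u i x‖ₑ ^ 2 ∂μ ≤ ∫⁻ x, s.card * ∑ i ∈ s, ‖u i x‖ₑ ^ 2 ∂μ :=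
        lintegral_mono fun x => enorm_sum_sq_le_card_mul s _
    _ = s.card * ∑ i ∈ s, ∫⁻ x, ‖u i x‖ₑ ^ 2 ∂μ := by
        rw [lintegral_const_mul' _ _ (ENNReal.natCast_ne_top _),
          lintegral_finsetSum' s fun i hi => ((hu i hi).enorm.pow_const 2)]

lemma lintegral_Ioi_inv_pow_succ {k : ℕ} (hk : k ≠ 0) {c : ℝ} (hc : 0 < c) :
    ∫⁻ y in Ioi c, ENNReal.ofReal (1 / y ^ (k + 1)) = ENNReal.ofReal (1 / (k * c ^ k)) := by
  have hexp : (-(k + 1 : ℝ)) < -1 := by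
    have : (0 : ℝ) < k := Nat.cast_pos.mpr (Nat.pos_of_ne_zero hk)
    linarith
  have hrpow : ∀ y ∈ Ioi c, y ^ (-(k + 1 : ℝ)) = 1 / y ^ (k + 1) := fun y hy => by
    rw [rpow_neg (hc.trans hy).le, ← one_div, ← Nat.cast_succ, rpow_natCast]
  have hint : IntegrableOn (fun y : ℝ => 1 / y ^ (k + 1)) (Ioi c) :=
    (integrableOn_Ioi_rpow_of_lt hexp hc).congr_fun hrpow measurableSet_Ioi
  have hval : ∫ y in Ioi c, 1 / y ^ (k + 1) = 1 / (k * c ^ k) := by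
    rw [← setIntegral_congr_fun measurableSet_Ioi hrpow, integral_Ioi_rpow_of_lt hexp hc,
      show -(k + 1 : ℝ) + 1 = -k by ring, rpow_neg hc.le, rpow_natCast]
    field_simp
  rw [← ofReal_integral_eq_lintegral_ofReal hint
    (ae_restrict_of_forall_mem measurableSet_Ioi fun y hy => by
      have := hc.trans hy
      positivity), hval]

lemma setLIntegral_abs_ge_inv_abs_pow_succ_le {k : ℕ} (hk : k ≠ 0) {c : ℝ} (hc : 0 < c) :
    ∫⁻ y in {y : ℝ | c ≤ |y|}, ENNReal.ofReal (1 / |y| ^ (k + 1)) ≤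
      ENNReal.ofReal (2 / (k * c ^ k)) := by
  set g : ℝ → ℝ≥0∞ := fun y => ENNReal.ofReal (1 / |y| ^ (k + 1))
  have hIci : ∫⁻ y in Ici c, g y = ENNReal.ofReal (1 / (k * c ^ k)) := by
    rw [← restrict_Ioi_eq_restrict_Ici, ← lintegral_Ioi_inv_pow_succ hk hc]
    exact setLIntegral_congr_fun measurableSet_Ioi fun y hy => by
      simp only [g, abs_of_pos (hc.trans hy)]
  have hIic : ∫⁻ y in Iic (-c), g y = ∫⁻ y in Ici c, g y := by
    have := (Measure.measurePreserving_neg volume).setLIntegral_comp_preimage_emb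
      (MeasurableEquiv.neg ℝ).measurableEmbedding g (Ici c)
    simpa [g, neg_preimage] using this
  have hset : {y : ℝ | c ≤ |y|} = Iic (-c) ∪ Ici c := by
    ext y
    simp [le_abs, le_neg, or_comm]
  calc ∫⁻ y in {y : ℝ | c ≤ |y|}, g y ≤ (∫⁻ y in Iic (-c), g y) + ∫⁻ y in Ici c, g y := by
        rw [hset]
        exact lintegral_union_le _ _ _
    _ = ENNReal.ofReal (2 / (k * c ^ k)) := by
        rw [hIic, hIci, ← ENNReal.ofReal_add (by positivity) (by positivity)]
        ring_nf

lemma tail_subset_of_abs_sub_le {a r δ l : ℝ} (hl : |l - a| ≤ r) :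
    {x : ℝ | (1 + δ) * r ≤ |x - a|} ⊆ {x : ℝ | δ * r ≤ |x - l|} := fun x hx => by
  have := abs_sub_abs_le_abs_sub (x - a) (l - a)
  simp only [mem_ofPred_eq, sub_sub_sub_cancel_right] at hx this ⊢
  linarith

lemma setLIntegral_enorm_mul_sinc_sq_sq_le {δ r l K : ℝ} (hδ : 0 < δ) (hr : 0 < r)
    {g : ℝ → ℂ} (hg : ∀ x, ‖g x‖ ≤ K) :
    ∫⁻ x in {x : ℝ | δ * r ≤ |x - l|}, ‖g x * ((sinc (δ * (x - l) / 2) ^ 2 : ℝ) : ℂ)‖ₑ ^ 2 ≤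
      ENNReal.ofReal (K ^ 2 * (32 / (3 * δ ^ 7 * r ^ 3))) := by
  set C := K ^ 2 * (16 / δ ^ 4)
  have hpoint : ∀ x ∈ {x : ℝ | δ * r ≤ |x - l|},
      ‖g x * ((sinc (δ * (x - l) / 2) ^ 2 : ℝ) : ℂ)‖ₑ ^ 2 ≤
        ENNReal.ofReal C * ENNReal.ofReal (1 / |x - l| ^ 4) := fun x hx => by
    have hy : x - l ≠ 0 := fun h => by
      simp only [mem_ofPred_eq, h, abs_zero] at hx
      nlinarith
    have hK : ‖g x‖ ^ 2 ≤ K ^ 2 := pow_le_pow_left₀ (norm_nonneg _) (hg x) 2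
    have hsinc := sinc_sq_sq_le hδ hy
    rw [← ENNReal.ofReal_mul (by positivity), ← ofReal_norm, ← ENNReal.ofReal_pow (norm_nonneg _)]
    refine ENNReal.ofReal_le_ofReal ?_
    rw [norm_mul, Complex.norm_real, Real.norm_eq_abs, mul_pow, sq_abs, mul_assoc]
    gcongr
  have hshift : ∫⁻ x in {x : ℝ | δ * r ≤ |x - l|}, ENNReal.ofReal (1 / |x - l| ^ 4) =
      ∫⁻ y in {y : ℝ | δ * r ≤ |y|}, ENNReal.ofReal (1 / |y| ^ 4) :=
    (measurePreserving_sub_right volume l).setLIntegral_comp_preimage_emb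
      (measurableEmbedding_subRight l) (fun y => ENNReal.ofReal (1 / |y| ^ 4))
      {y : ℝ | δ * r ≤ |y|}
  calc _ ≤ ∫⁻ x in {x : ℝ | δ * r ≤ |x - l|},
          ENNReal.ofReal C * ENNReal.ofReal (1 / |x - l| ^ 4) :=
        setLIntegral_mono' (measurableSet_le measurable_const (by fun_prop)) hpoint
    _ = ENNReal.ofReal C * ∫⁻ y in {y : ℝ | δ * r ≤ |y|}, ENNReal.ofReal (1 / |y| ^ 4) := by
        rw [lintegral_const_mul' _ _ ENNReal.ofReal_ne_top, hshift]
    _ ≤ ENNReal.ofReal C * ENNReal.ofReal (2 / ((3 : ℕ) * (δ * r) ^ 3)) := by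
        gcongr
        exact setLIntegral_abs_ge_inv_abs_pow_succ_le three_ne_zero (by positivity)
    _ = ENNReal.ofReal (K ^ 2 * (32 / (3 * δ ^ 7 * r ^ 3))) := by
        rw [← ENNReal.ofReal_mul (by positivity)]
        congr 1
        simp only [C]
        field_simp
        ring

theorem tail_estimate_general
    (δ r a M : ℝ) (n : ℕ) (hδ : 0 < δ) (hr : 0 < r)
    (f : Fin n → ℝ → ℂ) (hfm : ∀ j, Measurable (f j)) (hfb : ∀ j x, ‖f j x‖ ≤ M)
    (lam : Fin n → ℝ) (hlam : ∀ j, lam j ∈ Set.Ioo (a - r) (a + r))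
    (c : Fin n → ℂ)
    (φ : ℝ → ℝ)
    (hφ : ∀ x : ℝ, φ x =
      if x = 0 then 1 else (Real.sin (δ * x / 2) / (δ * x / 2)) ^ 2) :
    ∫⁻ x in {x : ℝ | (1 + δ) * r ≤ |x - a|},
        (‖∑ j : Fin n, c j * f j x * ((φ (x - lam j) : ℝ) : ℂ)‖₊ : ℝ≥0∞) ^ 2 ≤
      ENNReal.ofReal (32 * n * M ^ 2 / (3 * δ ^ 7 * r ^ 3) * ∑ j : Fin n, ‖c j‖ ^ 2) := by
  obtain rfl : φ = fun x => sinc (δ * x / 2) ^ 2 := funext fun x => by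
    simp [hφ, sinc_apply, hδ.ne']
  have hdist (j : Fin n) : |lam j - a| ≤ r :=
    (abs_sub_lt_iff.mpr ⟨by linarith [(hlam j).2], by linarith [(hlam j).1]⟩).le
  have hbound (j : Fin n) (x : ℝ) : ‖c j * f j x‖ ≤ ‖c j‖ * M := by
    rw [norm_mul]
    gcongr
    exact hfb j x
  have hterm (j : Fin n) :=
    (lintegral_mono_set (tail_subset_of_abs_sub_le (δ := δ) (hdist j))).trans
      (setLIntegral_enorm_mul_sinc_sq_sq_le hδ hr (hbound j))
  calc _ ≤ n * ∑ j : Fin n, ENNReal.ofReal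
        ((‖c j‖ * M) ^ 2 * (32 / (3 * δ ^ 7 * r ^ 3))) := by
        refine (lintegral_enorm_sum_sq_le _ fun j _ => ?_).trans ?_
        · exact (((hfm j).const_mul _).mul (by fun_prop)).aestronglyMeasurable
        · rw [Finset.card_univ, Fintype.card_fin]
          gcongr with j
          exact hterm j
    _ = _ := by
        rw [← ENNReal.ofReal_sum_of_nonneg (fun j _ => by positivity), ← ENNReal.ofReal_natCast,
          ← ENNReal.ofReal_mul (by positivity), Finset.mul_sum, Finset.mul_sum]
        congr 1
        exact Finset.sum_congr rfl fun j _ => by ring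

/-- **Tail estimate.** If `|f_j| ≤ M`, `λ_j ∈ (a-r, a+r)` and `φ` is the squared sinc function
with parameter `δ`, then
`∫_{|x-a| ≥ (1+δ)r} |∑ c_j f_j(x) φ(x-λ_j)|² dx ≤ (32nM²/(3δ⁷r³)) ∑ |c_j|²`. -/
theorem tail_estimate
    (δ r a M : ℝ) (n : ℕ) (hδ : 0 < δ) (hr : 0 < r) (hM : 0 < M)
    (f : Fin n → ℝ → ℂ) (hfm : ∀ j, Measurable (f j)) (hfb : ∀ j x, ‖f j x‖ ≤ M)
    (lam : Fin n → ℝ) (hlam : ∀ j, lam j ∈ Set.Ioo (a - r) (a + r))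
    (c : Fin n → ℂ)
    (φ : ℝ → ℝ)
    (hφ : ∀ x : ℝ, φ x =
      if x = 0 then 1 else (Real.sin (δ * x / 2) / (δ * x / 2)) ^ 2) :
    ∫⁻ x in {x : ℝ | (1 + δ) * r ≤ |x - a|},
        (‖∑ j : Fin n, c j * f j x * ((φ (x - lam j) : ℝ) : ℂ)‖₊ : ℝ≥0∞) ^ 2 ≤
      ENNReal.ofReal (32 * n * M ^ 2 / (3 * δ ^ 7 * r ^ 3) * ∑ j : Fin n, ‖c j‖ ^ 2) :=
  tail_estimate_general δ r a M n hδ hr f hfm hfb lam hlam c φ hφ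
end
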